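/- arXiv:1311.5741 — 6 statements merged into one kernel-verified Lean document; each statement's English description precedes it below -/
import Mathlib

section
/- Let B be a left noetherian unital ring and R a right ideal of B that is nil, i.e., every element of R is nilpotent. Then R is nilpotent: there exists n ≥ 1 such that every product of n elements of R is zero. -/
/-!
Levitzki's argument. Since `B` is left noetherian, there is a two-sided ideal `K` maximal among
the nilpotent two-sided ideals. If some `r ∈ R` were not in `K`, pick `a ∈ R \ K` whose colon
ideal `(K : a) = {x | x a ∈ K}` is maximal. For every `b`, `ab` is nilpotent, so the elements
`a (ba)^k` of `R` eventually fall into `K`; at the last `c = a (ba)^k` outside `K` we have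
`(K : a) ≤ (K : c)`, hence equality, and `ab ∈ (K : c)` gives `aba ∈ K`. Then `J = BaB`
satisfies `J² ⊆ K`, so `K + J` is a nilpotent two-sided ideal strictly containing `K`.
-/

namespace Ideal

variable {B : Type*} [Ring B]

theorem isNilpotent_of_mul_self_le {I K : Ideal B} (h : I * I ≤ K) (hK : IsNilpotent K) :
    IsNilpotent I := by
  obtain ⟨n, hn⟩ := hK
  have pow_le : ∀ m, I ^ (2 * m) ≤ K ^ m := by
    intro m
    induction m with
    | zero => rfl
    | succ m ih =>
      rw [mul_add, mul_one, Submodule.pow_add _ two_ne_zero, Submodule.pow_succ K]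
      exact mul_mono ih (by rwa [Submodule.pow_succ, Submodule.pow_one])
  exact ⟨2 * n, (hn ▸ pow_le n).antisymm bot_le⟩

instance isTwoSided_sup (I J : Ideal B) [I.IsTwoSided] [J.IsTwoSided] : (I ⊔ J).IsTwoSided where
  mul_mem_of_left b h := by
    obtain ⟨y, hy, z, hz, rfl⟩ := Submodule.mem_sup.1 h
    exact add_mul y z b ▸ Submodule.add_mem_sup (I.mul_mem_right b hy) (J.mul_mem_right b hz)

theorem sup_mul_self_le {K J : Ideal B} [K.IsTwoSided] (h : J * J ≤ K) :
    (K ⊔ J) * (K ⊔ J) ≤ K := by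
  simp only [Submodule.mul_sup, Submodule.sup_mul, sup_le_iff]
  exact ⟨⟨mul_le_left, mul_le_right⟩, ⟨mul_le_left, h⟩⟩

theorem span_singleton_mul_top_mul_self_le {K : Ideal B} [K.IsTwoSided] {a : B}
    (h : ∀ b, a * b * a ∈ K) : span {a} * ⊤ * (span {a} * ⊤) ≤ K := by
  have hspan : span {a} * span {a} ≤ K := by
    refine mul_le.2 fun r hr s hs => ?_
    obtain ⟨c, rfl⟩ := mem_span_singleton'.1 hr
    obtain ⟨d, rfl⟩ := mem_span_singleton'.1 hs
    simpa only [mul_assoc] using K.mul_mem_left c (h d)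
  calc span {a} * ⊤ * (span {a} * ⊤) = span {a} * (⊤ * span {a}) * ⊤ := by
        simp only [mul_assoc]
    _ ≤ K * ⊤ := mul_mono (by rw [top_mul]; exact hspan) le_rfl
    _ ≤ K := mul_le_left

theorem exists_isNilpotent_gt_of_mul_mul_mem {K : Ideal B} [K.IsTwoSided] (hK : IsNilpotent K)
    {a : B} (haK : a ∉ K) (h : ∀ b, a * b * a ∈ K) :
    ∃ L : Ideal B, L.IsTwoSided ∧ IsNilpotent L ∧ K < L := by
  have ha : a ∈ span {a} * ⊤ := by
    simpa using mul_mem_mul (mem_span_singleton_self a) (Submodule.mem_top (x := (1 : B)))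
  refine ⟨K ⊔ span {a} * ⊤, inferInstance, ?_, ?_⟩
  · exact isNilpotent_of_mul_self_le (sup_mul_self_le (span_singleton_mul_top_mul_self_le h)) hK
  · exact lt_of_le_of_ne le_sup_left fun hKL => haK (hKL ▸ Submodule.mem_sup_right ha)

theorem mul_mul_mem_of_maximalFor_colon {K : Ideal B} [K.IsTwoSided] {S : Set B}
    (hS : ∀ s ∈ S, ∀ b, s * b ∈ S) (hnil : ∀ s ∈ S, IsNilpotent s) {a : B}
    (ha : MaximalFor (fun x => x ∈ S ∧ x ∉ K) (fun x => K.colon {x}) a) (b : B) :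
    a * b * a ∈ K := by
  obtain ⟨⟨haS, haK⟩, hmax⟩ := ha
  set c : ℕ → B := fun k => a * (b * a) ^ k with hc
  obtain ⟨N, hN⟩ := hnil _ (hS a haS b)
  have hcN : c N ∈ K := by
    simp only [hc, ← mul_pow_mul, hN, zero_mul, K.zero_mem]
  obtain ⟨k, hck, hck₁⟩ : ∃ k, c k ∉ K ∧ c (k + 1) ∈ K := by
    by_contra! hstep
    exact Nat.rec (by simpa [hc] using haK) hstep N hcN
  have hle : K.colon {a} ≤ K.colon {c k} := fun x hx => by
    rw [Submodule.mem_colon_singleton] at hx ⊢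
    simpa only [hc, smul_eq_mul, mul_assoc] using K.mul_mem_right ((b * a) ^ k) hx
  have hab : a * b ∈ K.colon {c k} := Submodule.mem_colon_singleton.2 (by
    simpa only [hc, smul_eq_mul, pow_succ', mul_assoc] using hck₁)
  simpa only [Submodule.mem_colon_singleton, smul_eq_mul] using hmax ⟨hS a haS _, hck⟩ hle hab

theorem exists_isNilpotent_superset_of_forall_isNilpotent [IsNoetherianRing B] {S : Set B}
    (hS : ∀ s ∈ S, ∀ b, s * b ∈ S) (hnil : ∀ s ∈ S, IsNilpotent s) :
    ∃ K : Ideal B, IsNilpotent K ∧ S ⊆ K := by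
  obtain ⟨K, ⟨hK₂, hK⟩, hKmax⟩ := exists_maximal_of_wellFoundedGT
    (fun K : Ideal B => K.IsTwoSided ∧ IsNilpotent K) ⟨⊥, inferInstance, 1, by simp⟩
  refine ⟨K, hK, fun r hr => ?_⟩
  by_contra hrK
  obtain ⟨a, ha⟩ := exists_maximalFor_of_wellFoundedGT (fun x => x ∈ S ∧ x ∉ K)
    (fun x => K.colon {x}) ⟨r, hr, hrK⟩
  obtain ⟨L, hL₂, hL, hKL⟩ := exists_isNilpotent_gt_of_mul_mul_mem hK ha.1.2
    (mul_mul_mem_of_maximalFor_colon hS hnil ha)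
  exact hKL.not_ge (hKmax ⟨hL₂, hL⟩ hKL.le)

end Ideal

/-- Let `B` be a left noetherian unital ring and `R` a right ideal of `B` (an additive
subgroup closed under right multiplication by elements of `B`) which is nil, i.e. every
element of `R` is nilpotent. Then `R` is nilpotent: there is `n ≥ 1` such that every
product of `n` elements of `R` vanishes. -/
theorem nil_right_ideal_is_nilpotent (B : Type) [Ring B] [IsNoetherianRing B]
    (R : AddSubgroup B) (hR : ∀ r ∈ R, ∀ b : B, r * b ∈ R)
    (hnil : ∀ r ∈ R, IsNilpotent r) :
    ∃ n : ℕ, 1 ≤ n ∧ ∀ f : Fin n → B, (∀ i, f i ∈ R) → (List.ofFn f).prod = 0 := by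
  obtain ⟨K, ⟨n, hn⟩, hRK⟩ :=
    Ideal.exists_isNilpotent_superset_of_forall_isNilpotent (S := (R : Set B)) hR hnil
  refine ⟨n + 1, n.succ_pos, fun f hf => ?_⟩
  have hprod : (List.ofFn f).prod ∈ K ^ (n + 1) :=
    Submodule.pow_subset_pow K (Set.mem_pow.2 ⟨fun i => ⟨f i, hRK (hf i)⟩, rfl⟩)
  rwa [Submodule.pow_succ, hn, zero_mul, Submodule.zero_eq_bot, Submodule.mem_bot] at hprod
end

section
/- Let A be a commutative unital ring and B a left noetherian associative unital A-algebra. Suppose condition (E) holds: for every simple left module M over the polynomial ring B[X], the B[X]-linear endomorphism φ : M → M, φ(m) = X·m, is integral over A, i.e., there exist n ≥ 1 and z₀, …, z_{n−1} ∈ A with φⁿ + z_{n−1}φ^{n−1} + ⋯ + z₀ = 0 in End(M), where A acts on endomorphisms through the A-module structure of M. Then the Jacobson radical of B equals the Baer radical of B. -/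
/-!
Let `a ∈ J(B)` and let `M` be a simple `B[X]`-module. Condition (E) gives a monic `q` with
`q M = 0`, so `M = B[X] m₀` is spanned over `B` by finitely many `Xⁱ m₀`. Since `X` is central,
`J(B) M` is a `B[X]`-submodule, hence `0` or `M`, and Nakayama's lemma over `B` excludes `M`.
Thus `a` kills every simple `B[X]`-module, i.e. `a ∈ J(B[X])`, so `1 - aX` is left invertible in
`B[X]`; the coefficients of its inverse are the powers of `a`, hence `a` is nilpotent.

So `J(B)` is a nil left ideal, and in a left noetherian ring a nil left ideal lies in every prime
`P`: otherwise choose `c ∈ J(B) \ P` with `{y | y c ∈ P}` maximal; then `c B c ⊆ P`, contradicting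
primality. Conversely, the annihilator of a simple module is prime.
-/

open Polynomial

/-- A two-sided ideal `P` of `B` is prime if `P ≠ B` and for all two-sided ideals
`J₁, J₂` with `J₁J₂ ⊆ P` one has `J₁ ⊆ P` or `J₂ ⊆ P`. -/
def TwoSidedIdeal.IsPrimeIdeal {B : Type} [Ring B] (P : TwoSidedIdeal B) : Prop :=
  P ≠ ⊤ ∧ ∀ J₁ J₂ : TwoSidedIdeal B,
    (∀ a ∈ J₁, ∀ b ∈ J₂, a * b ∈ P) → J₁ ≤ P ∨ J₂ ≤ P

universe u

namespace TwoSidedIdeal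

variable {B : Type} [Ring B] {P : TwoSidedIdeal B}

lemma mul_mem_of_mem_span_singleton {a b u v : B} (h : ∀ x, a * x * b ∈ P)
    (hu : u ∈ span {a}) (hv : v ∈ span {b}) : u * v ∈ P := by
  have hleft : ∀ u ∈ span {a}, ∀ y, u * y * b ∈ P := by
    intro u hu
    induction hu using span_induction with
    | mem x hx => rw [Set.mem_singleton_iff.1 hx]; exact h
    | zero => simp [P.zero_mem]
    | add x y _ _ hx hy => intro z; rw [add_mul, add_mul]; exact P.add_mem (hx z) (hy z)
    | neg x _ hx => intro z; rw [neg_mul, neg_mul]; exact P.neg_mem (hx z)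
    | left_absorb r x _ hx =>
      intro z; rw [mul_assoc r, mul_assoc r]; exact P.mul_mem_left _ _ (hx z)
    | right_absorb r x _ hx => intro z; rw [mul_assoc x r]; exact hx _
  suffices ∀ y, u * y * v ∈ P by simpa using this 1
  induction hv using span_induction with
  | mem x hx => rw [Set.mem_singleton_iff.1 hx]; exact hleft u hu
  | zero => simp [P.zero_mem]
  | add x y _ _ hx hy => intro z; rw [mul_add]; exact P.add_mem (hx z) (hy z)
  | neg x _ hx => intro z; rw [mul_neg]; exact P.neg_mem (hx z)
  | left_absorb r x _ hx => intro z; rw [← mul_assoc, mul_assoc u]; exact hx _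
  | right_absorb r x _ hx => intro z; rw [← mul_assoc]; exact P.mul_mem_right _ _ (hx z)

lemma isPrimeIdeal_iff :
    P.IsPrimeIdeal ↔ P ≠ ⊤ ∧ ∀ a b : B, (∀ x, a * x * b ∈ P) → a ∈ P ∨ b ∈ P := by
  refine and_congr_right fun _ ↦ ⟨fun hP a b h ↦ ?_, fun hP J₁ J₂ h ↦ ?_⟩
  · refine (hP (span {a}) (span {b}) fun u hu v hv ↦
      mul_mem_of_mem_span_singleton h hu hv).imp ?_ ?_ <;>
    exact fun hle ↦ hle (subset_span rfl)
  · by_contra! hJ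
    obtain ⟨⟨a, ha, haP⟩, ⟨b, hb, hbP⟩⟩ : (∃ a ∈ J₁, a ∉ P) ∧ ∃ b ∈ J₂, b ∉ P := by
      simpa [SetLike.not_le_iff_exists] using hJ
    exact (hP a b fun x ↦ mul_assoc a x b ▸ h a ha _ (J₂.mul_mem_left x b hb)).elim haP hbP

lemma isPrimeIdeal_annihilator (M : Type*) [AddCommGroup M] [Module B M] [IsSimpleModule B M] :
    (Module.annihilator B M).toTwoSided.IsPrimeIdeal := by
  have : Nontrivial M := IsSimpleModule.nontrivial B M
  refine isPrimeIdeal_iff.2 ⟨fun h ↦ ?_, fun a b h ↦ or_iff_not_imp_right.2 fun hb ↦ ?_⟩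
  · rw [← one_mem_iff, Ideal.mem_toTwoSided, Module.mem_annihilator] at h
    exact not_subsingleton M ⟨fun x y ↦ by rw [← one_smul B x, ← one_smul B y, h, h]⟩
  · simp only [Ideal.mem_toTwoSided, Module.mem_annihilator, not_forall] at h hb ⊢
    obtain ⟨m, hm⟩ := hb
    intro x
    obtain ⟨y, rfl⟩ := Submodule.mem_span_singleton.1
      ((IsSimpleModule.span_singleton_eq_top B hm).ge (Submodule.mem_top (x := x)))
    rw [← mul_smul, ← mul_smul]
    exact h y m

/-- The left ideal `{y | y * c ∈ P}`. -/
def leftColon (P : TwoSidedIdeal B) (c : B) : Ideal B :=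
  Submodule.comap (LinearMap.toSpanSingleton B B c) P.asIdeal

lemma mem_leftColon {c y : B} : y ∈ P.leftColon c ↔ y * c ∈ P := Iff.rfl

lemma leftColon_le_leftColon_mul (c d : B) : P.leftColon c ≤ P.leftColon (c * d) := by
  intro y hy
  rw [mem_leftColon, ← mul_assoc]
  exact P.mul_mem_right _ _ hy

lemma mul_mul_self_mem_of_maximal_leftColon {I : Ideal B} (hI : ∀ c ∈ I, IsNilpotent c)
    {c : B} (hc : c ∈ I) (hcP : c ∉ P)
    (hmax : ∀ d ∈ I, d ∉ P → ¬P.leftColon c < P.leftColon d) (x : B) : c * x * c ∈ P := by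
  by_contra hx
  have hpow : ∀ k, (c * x) ^ k * c ∉ P := by
    intro k
    induction k with
    | zero => simpa using hcP
    | succ k ih =>
      have hle : P.leftColon c ≤ P.leftColon ((c * x) ^ k * c) := by
        rw [mul_pow_mul]
        exact leftColon_le_leftColon_mul c _
      have heq := (hle.lt_or_eq.resolve_left (hmax _ (I.mul_mem_left _ hc) ih)).symm
      rwa [pow_succ', mul_assoc, ← mem_leftColon, heq, mem_leftColon]
  obtain ⟨m, hm⟩ := hI (x * c) (I.mul_mem_left x hc)
  exact hpow m (by rw [mul_pow_mul, hm, mul_zero]; exact P.zero_mem)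

lemma IsPrimeIdeal.mem_of_forall_isNilpotent [IsNoetherianRing B] (hP : P.IsPrimeIdeal)
    {I : Ideal B} (hI : ∀ c ∈ I, IsNilpotent c) {a : B} (ha : a ∈ I) : a ∈ P := by
  by_contra haP
  obtain ⟨_, ⟨c, ⟨hc, hcP⟩, rfl⟩, hmax⟩ := set_has_maximal_iff_noetherian.2 inferInstance
    (P.leftColon '' {c | c ∈ I ∧ c ∉ P}) ⟨_, a, ⟨ha, haP⟩, rfl⟩
  have hcc : ∀ x, c * x * c ∈ P := mul_mul_self_mem_of_maximal_leftColon hI hc hcP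
    fun d hd hdP ↦ hmax _ ⟨d, ⟨hd, hdP⟩, rfl⟩
  exact hcP (or_self_iff.1 ((isPrimeIdeal_iff.1 hP).2 c c hcc))

end TwoSidedIdeal

lemma Ring.mem_jacobson_of_forall_smul_eq_zero {R : Type u} [Ring R] {a : R}
    (h : ∀ (M : Type u) [AddCommGroup M] [Module R M], IsSimpleModule R M → ∀ m : M, a • m = 0) :
    a ∈ Ring.jacobson R := by
  rw [Ring.jacobson_eq_sInf_isMaximal, Submodule.mem_sInf]
  intro L hL
  have := h (R ⧸ L) (isSimpleModule_iff_isCoatom.2 (Ideal.isMaximal_def.1 hL))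
    (Submodule.Quotient.mk 1)
  rwa [← Submodule.Quotient.mk_smul, smul_eq_mul, mul_one, Submodule.Quotient.mk_eq_zero] at this

section PolynomialModule

variable {R M : Type*} [Ring R] [AddCommGroup M] [Module R M] [Module R[X] M]
  [IsScalarTower R R[X] M]

lemma Polynomial.X_smul_smul (r : R) (m : M) : (X : R[X]) • r • m = r • (X : R[X]) • m := by
  rw [← smul_one_smul R[X] r m, ← smul_one_smul R[X] r (X • m), smul_smul, smul_smul,
    smul_eq_C_mul, mul_one, X_mul]

lemma Polynomial.monomial_smul (n : ℕ) (r : R) (m : M) :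
    monomial n r • m = r • (X : R[X]) ^ n • m := by
  rw [← C_mul_X_pow_eq_monomial, ← smul_eq_C_mul, smul_assoc]

lemma Submodule.polynomial_smul_mem {N : Submodule R M} (hN : ∀ m ∈ N, (X : R[X]) • m ∈ N)
    (p : R[X]) {m : M} (hm : m ∈ N) : p • m ∈ N := by
  have hpow : ∀ n, (X : R[X]) ^ n • m ∈ N := by
    intro n
    induction n with
    | zero => simpa using hm
    | succ n ih => rw [pow_succ', mul_smul]; exact hN _ ih
  induction p using Polynomial.induction_on' with
  | add p q hp hq => rw [add_smul]; exact N.add_mem hp hq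
  | monomial n r => rw [monomial_smul]; exact N.smul_mem r (hpow n)

lemma Module.Finite.of_monic_smul_eq_zero {q : R[X]} (hq : q.Monic) (hqM : ∀ m : M, q • m = 0)
    {m₀ : M} (hm₀ : Submodule.span R[X] {m₀} = ⊤) : Module.Finite R M := by
  classical
  rw [Module.finite_def]
  refine ⟨(Finset.range (q.natDegree + 1)).image fun i ↦ (X : R[X]) ^ i • m₀,
    eq_top_iff.2 fun x _ ↦ ?_⟩
  obtain ⟨p, rfl⟩ := Submodule.mem_span_singleton.1 (hm₀.ge (Submodule.mem_top (x := x)))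
  have hmod : p • m₀ = (p %ₘ q) • m₀ := by
    conv_lhs => rw [← modByMonic_add_div p q]
    rw [add_smul, mul_smul, hqM, add_zero]
  rw [hmod, as_sum_range' _ _ (Nat.lt_succ_of_le (natDegree_modByMonic_le p hq)),
    Finset.sum_smul]
  refine Submodule.sum_mem _ fun i hi ↦ ?_
  rw [monomial_smul]
  exact Submodule.smul_mem _ _ (Submodule.subset_span (Finset.mem_image_of_mem _ hi))

lemma Polynomial.smul_eq_zero_of_mem_jacobson [IsSimpleModule R[X] M] [Module.Finite R M] {a : R}
    (ha : a ∈ Ring.jacobson R) (m : M) : a • m = 0 := by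
  by_contra ham
  have : Nontrivial M := IsSimpleModule.nontrivial R[X] M
  set N : Submodule R M := Ring.jacobson R • ⊤
  have hN : ∀ m ∈ N, (X : R[X]) • m ∈ N := fun m hm ↦ by
    refine Submodule.smul_induction_on hm (fun r hr n _ ↦ ?_) fun _ _ ↦ ?_
    · rw [Polynomial.X_smul_smul]; exact Submodule.smul_mem_smul hr trivial
    · rw [smul_add]; exact N.add_mem
  refine (Submodule.jacobson_smul_lt_top (⊤ : Submodule R M)).ne (eq_top_iff.2 fun x _ ↦ ?_)
  obtain ⟨p, rfl⟩ := Submodule.mem_span_singleton.1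
    ((IsSimpleModule.span_singleton_eq_top R[X] ham).ge (Submodule.mem_top (x := x)))
  exact Submodule.polynomial_smul_mem hN p (Submodule.smul_mem_smul ha trivial)

end PolynomialModule

namespace Polynomial

lemma C_mem_jacobson_of_forall_monic {R : Type u} [Ring R]
    (h : ∀ (M : Type u) [AddCommGroup M] [Module R[X] M], IsSimpleModule R[X] M →
      ∃ q : R[X], q.Monic ∧ ∀ m : M, q • m = 0)
    {a : R} (ha : a ∈ Ring.jacobson R) : C a ∈ Ring.jacobson R[X] := by
  refine Ring.mem_jacobson_of_forall_smul_eq_zero fun M _ _ hM m ↦ ?_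
  let _ : Module R M := Module.compHom M (C : R →+* R[X])
  have : IsScalarTower R R[X] M := ⟨fun r p m ↦ by rw [smul_eq_C_mul, mul_smul]; rfl⟩
  have : Nontrivial M := IsSimpleModule.nontrivial R[X] M
  obtain ⟨q, hq, hqM⟩ := h M hM
  obtain ⟨m₀, hm₀⟩ := exists_ne (0 : M)
  have := Module.Finite.of_monic_smul_eq_zero hq hqM (IsSimpleModule.span_singleton_eq_top R[X] hm₀)
  exact smul_eq_zero_of_mem_jacobson ha m

lemma isNilpotent_of_mul_one_sub_C_mul_X_eq_one {R : Type*} [Ring R] {a : R} {u : R[X]}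
    (hu : u * (1 - C a * X) = 1) : IsNilpotent a := by
  have hcoeff : ∀ k, u.coeff k = a ^ k := by
    have hu' : u = 1 + u * C a * X := by
      rw [mul_assoc]; exact eq_add_of_sub_eq (by rwa [mul_sub, mul_one] at hu)
    intro k
    induction k with
    | zero => rw [hu']; simp
    | succ k ih => rw [hu', coeff_add, coeff_mul_X, coeff_mul_C, ih, coeff_one, pow_succ]; simp
  exact ⟨u.natDegree + 1, by rw [← hcoeff, coeff_eq_zero_of_natDegree_lt (Nat.lt_succ_self _)]⟩

lemma isNilpotent_of_C_mem_jacobson {R : Type*} [Ring R] {a : R}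
    (ha : C a ∈ Ring.jacobson R[X]) : IsNilpotent a := by
  rw [← Ideal.jacobson_bot] at ha
  obtain ⟨u, hu⟩ := Ideal.exists_mul_add_sub_mem_of_mem_jacobson _
    ((Ideal.neg_mem_iff _).2 (Ideal.mul_mem_right X _ ha))
  rw [Ideal.mem_bot, sub_eq_zero, neg_add_eq_sub] at hu
  exact isNilpotent_of_mul_one_sub_C_mul_X_eq_one hu

end Polynomial

/-- Let `A` be a commutative ring and `B` a left noetherian `A`-algebra satisfying
condition (E): for every simple left `B[X]`-module `M`, the endomorphism `φ(m) = X • m`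
is integral over `A`, i.e. there are `n ≥ 1` and `z₀, …, z_{n-1} ∈ A` with
`φⁿ + z_{n-1}φ^{n-1} + ⋯ + z₀ = 0` on `M` (where `A` acts on `M` through
`A → B → B[X]`).  Then the Jacobson radical of `B` (the intersection of the
annihilators of all simple left `B`-modules) equals the Baer radical of `B`
(the intersection of all prime two-sided ideals). -/
theorem jacobson_eq_baer_of_condition_E (A B : Type) [CommRing A] [Ring B] [Algebra A B]
    [IsNoetherianRing B]
    (hE : ∀ (M : Type) [AddCommGroup M] [Module (Polynomial B) M],
      IsSimpleModule (Polynomial B) M →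
      ∃ n : ℕ, 1 ≤ n ∧ ∃ z : Fin n → A, ∀ m : M,
        ((X : Polynomial B) ^ n
          + ∑ i : Fin n, C (algebraMap A B (z i)) * X ^ (i : ℕ)) • m = 0) :
    ∀ a : B,
      (∀ (M : Type) [AddCommGroup M] [Module B M],
        IsSimpleModule B M → ∀ m : M, a • m = 0)
      ↔ (∀ P : TwoSidedIdeal B, P.IsPrimeIdeal → a ∈ P) := by
  have hmonic : ∀ (M : Type) [AddCommGroup M] [Module B[X] M], IsSimpleModule B[X] M →
      ∃ q : B[X], q.Monic ∧ ∀ m : M, q • m = 0 := fun M _ _ hM ↦ by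
    obtain ⟨n, -, z, hz⟩ := hE M hM
    exact ⟨_, monic_X_pow_add (degree_sum_fin_lt _), hz⟩
  have hnil : ∀ c ∈ Ring.jacobson B, IsNilpotent c := fun c hc ↦
    isNilpotent_of_C_mem_jacobson (C_mem_jacobson_of_forall_monic hmonic hc)
  refine fun a ↦ ⟨fun ha P hP ↦ ?_, fun ha M _ _ hM m ↦ ?_⟩
  · exact hP.mem_of_forall_isNilpotent hnil (Ring.mem_jacobson_of_forall_smul_eq_zero ha)
  · have := ha _ (TwoSidedIdeal.isPrimeIdeal_annihilator M)
    rw [Ideal.mem_toTwoSided, Module.mem_annihilator] at this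
    exact this m
end

section
/- Let k be a field and B a unital associative k-algebra. Suppose condition (Q0) holds: every simple left B[X]-module M, regarded as a module over k[X] via the central embedding k[X] ⊆ B[X], is generically free over k[X], i.e., there exists a nonzero f ∈ k[X] such that the localized module M_f = k[X]_f ⊗_{k[X]} M is a free k[X]_f-module. Then condition (D) holds: for every simple left B[X]-module M, the endomorphism φ(m) = X·m is algebraic over k; equivalently, there exists a nonzero polynomial g ∈ k[X] with g·M = 0. -/
open Polynomial

/-!
If no nonzero `g ∈ k[X]` kills the simple `B[X]`-module `M`, then by Schur's lemma every nonzero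
`g`, being central in `B[X]`, acts bijectively on `M`. Then `M_f` is nonzero and every element of
`k[X]` prime to `f` acts surjectively on it; as `M_f` is free over `k[X]_f`, such an element is a
unit of `k[X]_f`, hence divides a power of `f`, hence is a unit of `k[X]`. But `f * X + 1` is
prime to `f` and not a unit.
-/

theorem Polynomial.commute_map_algebraMap {k B : Type*} [CommSemiring k] [Semiring B]
    [Algebra k B] (g : k[X]) (q : B[X]) : Commute (g.map (algebraMap k B)) q := by
  induction g using Polynomial.induction_on with
  | C a => simpa [← Polynomial.algebraMap_apply] using Algebra.commute_algebraMap_left a q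
  | add p r hp hr => simpa using hp.add_left hr
  | monomial n a _ =>
    simpa [← Polynomial.algebraMap_apply] using
      (Algebra.commute_algebraMap_left a q).mul_left (commute_X_pow q (n + 1))

theorem IsSimpleModule.smul_eq_zero_or_bijective_of_commute {R M : Type*} [Ring R]
    [AddCommGroup M] [Module R M] [IsSimpleModule R M] {c : R} (hc : ∀ r : R, Commute c r) :
    (∀ m : M, c • m = 0) ∨ Function.Bijective (fun m : M => c • m) := by
  let ψ : M →ₗ[R] M :=
    { toFun := (c • ·)
      map_add' := smul_add c
      map_smul' := fun r m => by simp only [RingHom.id_apply, smul_smul, (hc r).eq] }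
  by_cases hψ : ψ = 0
  · exact .inl fun m => LinearMap.congr_fun hψ m
  · exact .inr (LinearMap.bijective_of_ne_zero hψ)

section Localization

variable {R M : Type*} [CommRing R] [AddCommGroup M] [Module R M]

theorem LocalizedModule.nontrivial_of_smul_injective [Nontrivial M] {S : Submonoid R}
    (hS : ∀ s ∈ S, Function.Injective (fun m : M => s • m)) :
    Nontrivial (LocalizedModule S M) := by
  rw [← not_subsingleton_iff_nontrivial, LocalizedModule.subsingleton_iff]
  intro h
  obtain ⟨m, hm⟩ := exists_ne (0 : M)
  obtain ⟨s, hs, hsm⟩ := h m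
  exact hm (hS s hs (by simpa using hsm))

theorem LocalizedModule.algebraMap_smul_surjective {S : Submonoid R} {r : R}
    (hr : Function.Surjective (fun m : M => r • m)) :
    Function.Surjective
      (fun x : LocalizedModule S M => algebraMap R (Localization S) r • x) := by
  intro x
  induction x using LocalizedModule.induction_on with
  | h m s =>
    obtain ⟨m', rfl⟩ := hr m
    refine ⟨LocalizedModule.mk m' s, ?_⟩
    simp only [← Localization.mk_one_eq_algebraMap, LocalizedModule.mk_smul_mk, one_mul]

theorem isUnit_of_isCoprime_of_isUnit_algebraMap {f p : R} (S : Type*) [CommRing S]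
    [Algebra R S] [IsLocalization.Away f S] (hpf : IsCoprime p f)
    (hp : IsUnit (algebraMap R S p)) : IsUnit p := by
  obtain ⟨n, hn⟩ := (IsLocalization.Away.algebraMap_isUnit_iff f).mp hp
  exact (hpf.pow_right (n := n)).isUnit_of_dvd hn

end Localization

theorem Module.Free.isUnit_of_smul_surjective {A N : Type*} [CommRing A] [AddCommGroup N]
    [Module A N] [Module.Free A N] [Nontrivial N] {a : A}
    (ha : Function.Surjective (fun x : N => a • x)) : IsUnit a := by
  let b := Module.Free.chooseBasis A N
  obtain ⟨i⟩ := b.index_nonempty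
  obtain ⟨y, hy⟩ := ha (b i)
  have h := congrArg (fun z => b.repr z i) hy
  simp only [map_smul, Finsupp.smul_apply, smul_eq_mul, Module.Basis.repr_self,
    Finsupp.single_eq_same] at h
  exact .of_mul_eq_one _ h

theorem Polynomial.not_isUnit_mul_X_add_one {R : Type*} [CommRing R] [IsDomain R] {f : R[X]}
    (hf : f ≠ 0) : ¬IsUnit (f * X + 1) := by
  intro h
  have := natDegree_eq_zero_of_isUnit h
  rw [natDegree_add_eq_left_of_natDegree_lt (by simp [natDegree_mul_X hf]),
    natDegree_mul_X hf] at this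
  omega
/-- Let `k` be a field and `B` a unital `k`-algebra.  Suppose (Q0): every simple left
`B[X]`-module `M`, regarded as a `k[X]`-module via the central embedding
`k[X] → B[X]`, is generically free over `k[X]`, i.e. there is a nonzero `f ∈ k[X]`
such that the localization `M_f` is free over `k[X]_f`.  Then (D) holds: for every
simple left `B[X]`-module `M` there is a nonzero `g ∈ k[X]` with `g • M = 0`
(equivalently, the endomorphism `φ(m) = X • m` is algebraic over `k`). -/
theorem condition_Q0_implies_condition_D (k B : Type) [Field k] [Ring B] [Algebra k B]
    (hQ0 : ∀ (M : Type) [AddCommGroup M] [Module (Polynomial B) M],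
      IsSimpleModule (Polynomial B) M →
      letI : Module (Polynomial k) M :=
        Module.compHom M (Polynomial.mapRingHom (algebraMap k B))
      ∃ f : Polynomial k, f ≠ 0 ∧
        Module.Free (Localization (Submonoid.powers f))
          (LocalizedModule (Submonoid.powers f) M)) :
    ∀ (M : Type) [AddCommGroup M] [Module (Polynomial B) M],
      IsSimpleModule (Polynomial B) M →
      ∃ g : Polynomial k, g ≠ 0 ∧ ∀ m : M, (g.map (algebraMap k B)) • m = 0 := by
  intro M _ _ hM
  let : Module k[X] M := Module.compHom M (mapRingHom (algebraMap k B))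
  obtain ⟨f, hf, hfree⟩ := hQ0 M hM
  by_contra! hD
  have hbij (g : k[X]) (hg : g ≠ 0) : Function.Bijective (fun m : M => g • m) :=
    (IsSimpleModule.smul_eq_zero_or_bijective_of_commute (R := B[X])
      (commute_map_algebraMap g)).resolve_left (by simpa using hD g hg)
  have : Nontrivial M := IsSimpleModule.nontrivial (Polynomial B) M
  have : Nontrivial (LocalizedModule (Submonoid.powers f) M) :=
    LocalizedModule.nontrivial_of_smul_injective fun _ ⟨n, hn⟩ =>
      (hbij _ (hn ▸ pow_ne_zero n hf)).injective
  have hp : f * X + 1 ≠ 0 := fun h => by simpa using congrArg (coeff · 0) h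
  have hunit := Module.Free.isUnit_of_smul_surjective
    (LocalizedModule.algebraMap_smul_surjective (S := .powers f) (hbij _ hp).surjective)
  exact not_isUnit_mul_X_add_one hf <| isUnit_of_isCoprime_of_isUnit_algebraMap
    (Localization.Away f) ⟨1, -X, by ring⟩ hunit
end

section
/- Let A be a commutative unital ring and M an A-module endowed with a filtration {M_n : n ≥ −1}, i.e., an increasing sequence of A-submodules with M_{−1} = 0 and M = ⋃_{n≥0} M_n. Suppose f ∈ A is non-nilpotent and satisfies f·M_n ⊆ M_{n−1} for every n ≥ 0 for which the quotient A-module M_n/M_{n−1} is not free. Then the localized module M_f = A_f ⊗_A M is a free A_f-module. -/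
/-!
Localize the filtration at `f`. A step whose graded piece `M_n / M_{n-1}` is not free is killed
by `f`, which is a unit in `A_f`, so that step collapses; the other graded pieces stay free after
localization. A module with an exhaustive filtration whose graded pieces are all free is free:
lifts of bases of the graded pieces, taken together, form a basis.
-/

open Set Submodule

namespace Submodule

variable {R M ι : Type*} [Ring R] [AddCommGroup M] [Module R M] {N N' : Submodule R M}

theorem linearIndependent_mkQ_subtype {v : ι → N'}
    (hv : LinearIndependent R ((N.comap N'.subtype).mkQ ∘ v)) :
    LinearIndependent R (N.mkQ ∘ N'.subtype ∘ v) := by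
  have hinj : LinearMap.ker ((N.comap N'.subtype).mapQ N N'.subtype le_rfl) = ⊥ := by
    rw [ker_mapQ, mkQ_map_self]
  exact hv.map' _ hinj

theorem sup_span_subtype_eq (hle : N ≤ N') {v : ι → N'}
    (hv : span R (range ((N.comap N'.subtype).mkQ ∘ v)) = ⊤) :
    N ⊔ span R (range (N'.subtype ∘ v)) = N' := by
  have htop : N.comap N'.subtype ⊔ span R (range v) = ⊤ := by
    rw [← map_mkQ_eq_top, map_span, ← range_comp]
    exact hv
  have := congr_arg (map N'.subtype) htop
  rwa [map_sup, map_comap_subtype, inf_eq_right.mpr hle, map_span, ← range_comp,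
    map_subtype_top] at this

end Submodule

theorem Sigma.setOf_fst_lt_succ {ι : ℕ → Type*} (n : ℕ) :
    {j : Σ k, ι k | j.1 < n + 1} = {j | j.1 < n} ∪ range (Sigma.mk n) := by
  ext ⟨k, i⟩
  simp only [mem_ofPred_eq, mem_union, mem_range, Sigma.mk.injEq]
  constructor
  · intro h
    rcases Nat.lt_succ_iff_lt_or_eq.mp h with h | rfl
    · exact .inl h
    · exact .inr ⟨i, rfl, HEq.rfl⟩
  · rintro (h | ⟨i, rfl, -⟩) <;> omega

theorem Sigma.iUnion_setOf_fst_lt {ι : ℕ → Type*} : ⋃ n, {j : Σ k, ι k | j.1 < n} = univ :=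
  eq_univ_of_forall fun j ↦ mem_iUnion.mpr ⟨j.1 + 1, j.1.lt_succ_self⟩

namespace Submodule

variable {R M : Type*} [Ring R] [AddCommGroup M] [Module R M] {F : ℕ → Submodule R M}
  {ι : ℕ → Type*} (b : ∀ n, Module.Basis (ι n) R (F (n + 1) ⧸ (F n).comap (F (n + 1)).subtype))
  {v : ∀ n, ι n → F (n + 1)}

theorem span_image_lifts_fst_lt (hv : ∀ n, ((F n).comap (F (n + 1)).subtype).mkQ ∘ v n = b n)
    (hbot : F 0 = ⊥) (hmono : Monotone F) (n : ℕ) :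
    span R ((fun j : Σ k, ι k ↦ (v j.1 j.2 : M)) '' {j | j.1 < n}) = F n := by
  induction n with
  | zero => simp [hbot]
  | succ n ih =>
    rw [Sigma.setOf_fst_lt_succ, image_union, span_union, ih, ← range_comp,
      ← sup_span_subtype_eq (hmono n.le_succ) (hv n ▸ (b n).span_eq)]
    rfl

theorem linearIndepOn_lifts_fst_lt (hv : ∀ n, ((F n).comap (F (n + 1)).subtype).mkQ ∘ v n = b n)
    (hbot : F 0 = ⊥) (hmono : Monotone F) (n : ℕ) :
    LinearIndepOn R (fun j : Σ k, ι k ↦ (v j.1 j.2 : M)) {j | j.1 < n} := by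
  induction n with
  | zero =>
    simp only [Nat.not_lt_zero, ofPred_false]
    exact linearIndepOn_empty R _
  | succ n ih =>
    rw [Sigma.setOf_fst_lt_succ]
    refine ih.union_of_quotient ?_
    rw [span_image_lifts_fst_lt b hv hbot hmono, linearIndepOn_range_iff sigma_mk_injective]
    exact (linearIndependent_mkQ_subtype (hv n ▸ (b n).linearIndependent) :)

theorem linearIndependent_lifts (hv : ∀ n, ((F n).comap (F (n + 1)).subtype).mkQ ∘ v n = b n)
    (hbot : F 0 = ⊥) (hmono : Monotone F) :
    LinearIndependent R (fun j : Σ k, ι k ↦ (v j.1 j.2 : M)) := by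
  have hdir : Directed (· ⊆ ·) fun n ↦ {j : Σ k, ι k | j.1 < n} :=
    Monotone.directed_le fun _ _ hmn _ hj ↦ lt_of_lt_of_le hj hmn
  have := linearIndepOn_iUnion_of_directed hdir (linearIndepOn_lifts_fst_lt b hv hbot hmono)
  rwa [Sigma.iUnion_setOf_fst_lt, linearIndepOn_univ_iff] at this

theorem span_range_lifts (hv : ∀ n, ((F n).comap (F (n + 1)).subtype).mkQ ∘ v n = b n)
    (hbot : F 0 = ⊥) (hmono : Monotone F) (hsup : ⨆ n, F n = ⊤) :
    span R (range fun j : Σ k, ι k ↦ (v j.1 j.2 : M)) = ⊤ := by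
  rw [← image_univ, ← Sigma.iUnion_setOf_fst_lt, image_iUnion, span_iUnion, ← hsup]
  exact iSup_congr (span_image_lifts_fst_lt b hv hbot hmono)

end Submodule

theorem Module.free_of_filtration {R M : Type*} [Ring R] [AddCommGroup M] [Module R M]
    {F : ℕ → Submodule R M} (hbot : F 0 = ⊥) (hmono : Monotone F) (hsup : ⨆ n, F n = ⊤)
    (hfree : ∀ n, Module.Free R (F (n + 1) ⧸ (F n).comap (F (n + 1)).subtype)) :
    Module.Free R M := by
  let b n := Module.Free.chooseBasis R (F (n + 1) ⧸ (F n).comap (F (n + 1)).subtype)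
  choose v hv using fun n i ↦ Submodule.Quotient.mk_surjective _ (b n i)
  have hvb n : ((F n).comap (F (n + 1)).subtype).mkQ ∘ v n = b n := funext (hv n)
  exact .of_basis (.mk (linearIndependent_lifts b hvb hbot hmono)
    (span_range_lifts b hvb hbot hmono hsup).ge)

section Localization

variable {R S M N : Type*} [CommRing R] [CommRing S] [AddCommGroup M] [AddCommGroup N]
  [Module R M] [Module R N] [Algebra R S] [Module S N] [IsScalarTower R S N]
variable (S) (p : Submonoid R) [IsLocalization p S] (ℓ : M →ₗ[R] N) [IsLocalizedModule p ℓ]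

namespace Submodule

theorem coe_mk'_toLocalized' (Q : Submodule R M) (m : Q) (s : p) :
    ((IsLocalizedModule.mk' (Q.toLocalized' S p ℓ) m s : Q.localized' S p ℓ) : N) =
      IsLocalizedModule.mk' ℓ (m : M) s := by
  rw [eq_comm, IsLocalizedModule.mk'_eq_iff, ← SetLike.val_smul_of_tower,
    IsLocalizedModule.mk'_cancel']
  rfl

theorem localized'_comap_subtype {P Q : Submodule R M} (hPQ : P ≤ Q) :
    (P.comap Q.subtype).localized' S p (Q.toLocalized' S p ℓ) =
      (P.localized' S p ℓ).comap (Q.localized' S p ℓ).subtype := by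
  ext x
  simp only [mem_localized', mem_comap, subtype_apply]
  constructor
  · rintro ⟨m, hm, s, rfl⟩
    exact ⟨m, hm, s, (coe_mk'_toLocalized' S p ℓ Q m s).symm⟩
  · rintro ⟨m, hm, s, hx⟩
    refine ⟨⟨m, hPQ hm⟩, hm, s, Subtype.ext ?_⟩
    rw [coe_mk'_toLocalized', hx]

open scoped Pointwise in
theorem localized'_le_of_smul_mem {P Q : Submodule R M} {s : R} (hs : s ∈ p)
    (h : ∀ m ∈ Q, s • m ∈ P) : Q.localized' S p ℓ ≤ P.localized' S p ℓ :=
  localized'_le_localized'_of_smul_le S p ℓ ⟨s, hs⟩ (by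
    rintro _ ⟨m, hm, rfl⟩
    exact h m hm)

end Submodule

theorem Module.free_localized'_quotient {P Q : Submodule R M} (hPQ : P ≤ Q)
    [Module.Free R (Q ⧸ P.comap Q.subtype)] :
    Module.Free S (Q.localized' S p ℓ ⧸ (P.localized' S p ℓ).comap (Q.localized' S p ℓ).subtype) :=
  localized'_comap_subtype S p ℓ hPQ ▸
    Module.free_of_isLocalizedModule p ((P.comap Q.subtype).toLocalizedQuotient' S p _)

end Localization

theorem Module.free_of_isLocalizedModule_filtration {R S M N : Type*} [CommRing R] [CommRing S]
    [AddCommGroup M] [AddCommGroup N] [Module R M] [Module R N] [Algebra R S] [Module S N]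
    [IsScalarTower R S N] (p : Submonoid R) [IsLocalization p S] (ℓ : M →ₗ[R] N)
    [IsLocalizedModule p ℓ] (F : ℕ → Submodule R M) (hbot : F 0 = ⊥) (hmono : Monotone F)
    (hsup : ⨆ n, F n = ⊤)
    (hstep : ∀ n, ¬ Module.Free R (F (n + 1) ⧸ (F n).comap (F (n + 1)).subtype) →
      ∃ s ∈ p, ∀ m ∈ F (n + 1), s • m ∈ F n) :
    Module.Free S N := by
  let F' n := (F n).localized' S p ℓ
  have hbot' : F' 0 = ⊥ := by simp only [F', hbot, localized'_bot]
  have hmono' : Monotone F' := fun _ _ h ↦ (localized'gi S p ℓ).gc.monotone_l (hmono h)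
  have hsup' : ⨆ n, F' n = ⊤ := by simp only [F', ← localized'_iSup, hsup, localized'_top]
  refine free_of_filtration hbot' hmono' hsup' fun n ↦ ?_
  by_cases hfree : Module.Free R (F (n + 1) ⧸ (F n).comap (F (n + 1)).subtype)
  · exact free_localized'_quotient S p ℓ (hmono n.le_succ)
  · obtain ⟨s, hs, hsF⟩ := hstep n hfree
    have : Subsingleton (F' (n + 1) ⧸ (F' n).comap (F' (n + 1)).subtype) :=
      Submodule.Quotient.subsingleton_iff.mpr (comap_subtype_eq_top.mpr
        (localized'_le_of_smul_mem S p ℓ hs hsF))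
    infer_instance

theorem localization_free_of_filtration_general (A M : Type) [CommRing A] [AddCommGroup M]
    [Module A M] (F : ℕ → Submodule A M)
    (hbot : F 0 = ⊥) (hmono : Monotone F) (hsup : ⨆ n, F n = ⊤)
    (f : A)
    (hstep : ∀ n : ℕ,
      ¬ Module.Free A (↥(F (n + 1)) ⧸ (F n).comap (F (n + 1)).subtype) →
      ∀ m ∈ F (n + 1), f • m ∈ F n) :
    Module.Free (Localization (Submonoid.powers f))
      (LocalizedModule (Submonoid.powers f) M) :=
  Module.free_of_isLocalizedModule_filtration (Submonoid.powers f)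
    (LocalizedModule.mkLinearMap _ M) F hbot hmono hsup
    fun n hn ↦ ⟨f, Submonoid.mem_powers f, hstep n hn⟩

/-- Let `A` be a commutative ring and `M` an `A`-module with a filtration
`{M_n : n ≥ -1}` (an increasing sequence of submodules with `M₋₁ = 0` and
`M = ⋃ M_n`); here `F (n+1)` plays the role of `M_n` and `F 0 = ⊥` is `M₋₁`.
Suppose `f ∈ A` is non-nilpotent and `f • M_n ⊆ M_{n-1}` whenever the quotient
`M_n / M_{n-1}` is not a free `A`-module.  Then `M_f = A_f ⊗_A M` is a free
`A_f`-module. -/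
theorem localization_free_of_filtration (A M : Type) [CommRing A] [AddCommGroup M]
    [Module A M] (F : ℕ → Submodule A M)
    (hbot : F 0 = ⊥) (hmono : Monotone F) (hsup : ⨆ n, F n = ⊤)
    (f : A) (hf : ¬ IsNilpotent f)
    (hstep : ∀ n : ℕ,
      ¬ Module.Free A (↥(F (n + 1)) ⧸ (F n).comap (F (n + 1)).subtype) →
      ∀ m ∈ F (n + 1), f • m ∈ F n) :
    Module.Free (Localization (Submonoid.powers f))
      (LocalizedModule (Submonoid.powers f) M) :=
  localization_free_of_filtration_general A M F hbot hmono hsup f hstep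
end

section
/- Let k be a field and (B, 𝔤) a finitely generated almost commutative k-algebra. Then B satisfies condition (D): for every simple left module M over the polynomial ring B[X], the endomorphism φ(m) = X·m is algebraic over k; equivalently, there exists a nonzero polynomial g ∈ k[X] with g·M = 0. -/
/-!
Since `k[X]` is central in `B[X]`, Schur's lemma makes every `g ∈ k[X]` act on a simple
`B[X]`-module `M` either as `0` or bijectively; suppose the latter for all `g ≠ 0`. Fix `m₀ ≠ 0`
and generators `bᵢ` of `𝔤`, and filter `M` by the `k[X]`-submodules `Pₙ` spanned by the words of
length `< n` in the `bᵢ` applied to `m₀`. Commutators of the `bᵢ` lie in `𝔤`, so the symbols of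
the `bᵢ` commute on the associated graded module, which is therefore a cyclic module over a
finitely generated commutative `k[X]`-algebra, hence noetherian. So its `k[X]`-torsion is killed
by one `f ≠ 0`, i.e. `r • m ∈ Pₙ` with `m ∈ Pₙ₊₁`, `r ≠ 0` forces `f • m ∈ Pₙ`. Writing
`m₀ = r • u` and descending through the filtration gives `f ^ e • u ∈ k[X] • m₀`, whence
`r ∣ f ^ e` for every `r ≠ 0`: impossible in `k[X]` for `r = f * X + 1`.
-/

open Polynomial
open scoped DirectSum

attribute [local instance] Polynomial.algebra

open scoped IsMulCommutative in
theorem isNoetherianRing_adjoin_range_of_commute {R A ι : Type*} [CommRing R] [IsNoetherianRing R]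
    [Ring A] [Algebra R A] [Finite ι] (γ : ι → A) (hγ : ∀ i j, Commute (γ i) (γ j)) :
    IsNoetherianRing (Algebra.adjoin R (Set.range γ)) := by
  have := Algebra.isMulCommutative_adjoin R (s := Set.range γ)
    (by rintro _ ⟨i, rfl⟩ _ ⟨j, rfl⟩; exact hγ i j)
  have : Algebra.FiniteType R (Algebra.adjoin R (Set.range γ)) :=
    (Subalgebra.fg_iff_finiteType _).mp ⟨(Set.finite_range γ).toFinset, by simp⟩
  exact Algebra.FiniteType.isNoetherianRing R _

open nonZeroDivisors in
theorem exists_mem_nonZeroDivisors_smul_eq_zero_of_mem_torsion {R A G : Type*} [CommRing R]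
    [Ring A] [Algebra R A] [IsNoetherianRing A] [AddCommGroup G] [Module R G] [Module A G]
    [IsScalarTower R A G] [Module.Finite A G] :
    ∃ f ∈ R⁰, ∀ x ∈ Submodule.torsion R G, f • x = 0 := by
  classical
  let T : Submodule A G :=
    { Submodule.torsion R G with
      smul_mem' := fun a x ⟨r, hr⟩ => ⟨r, by rw [smul_comm, hr, smul_zero]⟩ }
  obtain ⟨t, ht⟩ := (IsNoetherian.noetherian T : T.FG)
  choose r hr using fun x : t =>
    (Submodule.mem_torsion_iff x.1).mp (ht ▸ Submodule.subset_span x.2 : x.1 ∈ T)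
  refine ⟨∏ x, (r x : R), Submonoid.prod_mem _ fun x _ => (r x).2, fun x hx => ?_⟩
  suffices T ≤ LinearMap.ker (DistribSMul.toLinearMap A G (∏ x, (r x : R))) from this hx
  rw [← ht, Submodule.span_le]
  intro y hy
  change (∏ x, (r x : R)) • y = 0
  rw [← Finset.prod_erase_mul _ _ (Finset.mem_univ ⟨y, hy⟩), mul_smul, ← Submonoid.smul_def,
    hr, smul_zero]

section AssocGr

variable {R M : Type*} [CommRing R] [AddCommGroup M] [Module R M] (P : ℕ → Submodule R M)

-- A `def` with its own instances rather than an `abbrev`: with the bare quotient, instance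
-- search cannot find `Ring (Module.End R (AssocGr P))`.
def GradedPiece (n : ℕ) : Type _ := P (n + 1) ⧸ (P n).comap (P (n + 1)).subtype

instance (n : ℕ) : AddCommGroup (GradedPiece P n) := Submodule.Quotient.addCommGroup _

instance (n : ℕ) : Module R (GradedPiece P n) := Submodule.Quotient.module _

namespace GradedPiece

def mk (n : ℕ) : P (n + 1) →ₗ[R] GradedPiece P n := Submodule.mkQ _

variable {P}

theorem mk_surjective (n : ℕ) : Function.Surjective (mk P n) := Submodule.mkQ_surjective _

theorem mk_eq_mk_iff {n : ℕ} (x y : P (n + 1)) : mk P n x = mk P n y ↔ (x - y : M) ∈ P n :=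
  Submodule.Quotient.eq _

theorem hom_ext {n : ℕ} {N : Type*} [AddCommGroup N] [Module R N] {φ ψ : GradedPiece P n →ₗ[R] N}
    (h : ∀ x, φ (mk P n x) = ψ (mk P n x)) : φ = ψ :=
  Submodule.linearMap_qext _ (LinearMap.ext h)

def map (w : Module.End R M) (hw : ∀ n, ∀ m ∈ P n, w m ∈ P (n + 1)) (n : ℕ) :
    GradedPiece P n →ₗ[R] GradedPiece P (n + 1) :=
  Submodule.mapQ _ _ (w.restrict (hw (n + 1))) fun x hx => hw n x hx

theorem map_mk {w : Module.End R M} (hw : ∀ n, ∀ m ∈ P n, w m ∈ P (n + 1)) {n : ℕ}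
    (x : P (n + 1)) : map w hw n (mk P n x) = mk P (n + 1) ⟨w x, hw _ _ x.2⟩ :=
  rfl

end GradedPiece

abbrev AssocGr : Type _ := ⨁ n, GradedPiece P n

namespace AssocGr

def mk (n : ℕ) : P (n + 1) →ₗ[R] AssocGr P :=
  DirectSum.lof R ℕ (GradedPiece P) n ∘ₗ GradedPiece.mk P n

variable {P}

theorem mk_eq_mk_iff {n : ℕ} (x y : P (n + 1)) : mk P n x = mk P n y ↔ (x - y : M) ∈ P n := by
  rw [mk, LinearMap.comp_apply, LinearMap.comp_apply, DirectSum.lof_eq_of, DirectSum.lof_eq_of,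
    (DirectSum.of_injective n).eq_iff, GradedPiece.mk_eq_mk_iff]

theorem mk_eq_zero_iff {n : ℕ} (x : P (n + 1)) : mk P n x = 0 ↔ (x : M) ∈ P n := by
  rw [← map_zero (mk P n), mk_eq_mk_iff, ZeroMemClass.coe_zero, sub_zero]

theorem submodule_eq_top {V : Submodule R (AssocGr P)} (hV : ∀ n x, mk P n x ∈ V) : V = ⊤ := by
  refine eq_top_iff.mpr fun g _ => ?_
  clear ‹g ∈ ⊤›
  induction g using DirectSum.induction_on with
  | zero => exact V.zero_mem
  | of n q =>
    obtain ⟨x, rfl⟩ := GradedPiece.mk_surjective n q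
    exact hV n x
  | add a b ha hb => exact V.add_mem ha hb

theorem hom_ext {N : Type*} [AddCommGroup N] [Module R N] {φ ψ : AssocGr P →ₗ[R] N}
    (h : ∀ n x, φ (mk P n x) = ψ (mk P n x)) : φ = ψ :=
  DirectSum.linearMap_ext R fun n => GradedPiece.hom_ext (h n)

def symbol (w : Module.End R M) (hw : ∀ n, ∀ m ∈ P n, w m ∈ P (n + 1)) :
    Module.End R (AssocGr P) :=
  DirectSum.toModule R ℕ _ fun n =>
    DirectSum.lof R ℕ (GradedPiece P) (n + 1) ∘ₗ GradedPiece.map w hw n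

theorem symbol_mk {w : Module.End R M} (hw : ∀ n, ∀ m ∈ P n, w m ∈ P (n + 1)) (n : ℕ)
    (x : P (n + 1)) : symbol w hw (mk P n x) = mk P (n + 1) ⟨w x, hw _ _ x.2⟩ := by
  rw [symbol, mk, LinearMap.comp_apply, DirectSum.toModule_lof, LinearMap.comp_apply,
    GradedPiece.map_mk]
  rfl

theorem commute_symbol {v w : Module.End R M} (hv : ∀ n, ∀ m ∈ P n, v m ∈ P (n + 1))
    (hw : ∀ n, ∀ m ∈ P n, w m ∈ P (n + 1))
    (hvw : ∀ n, ∀ m ∈ P n, v (w m) - w (v m) ∈ P (n + 1)) :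
    Commute (symbol v hv) (symbol w hw) := by
  refine hom_ext (N := AssocGr P) fun n x => ?_
  rw [Module.End.mul_apply, Module.End.mul_apply, symbol_mk, symbol_mk, symbol_mk, symbol_mk,
    mk_eq_mk_iff]
  exact hvw (n + 1) x x.2

end AssocGr

end AssocGr

section WordFiltration

variable {R M ι : Type*} [CommRing R] [AddCommGroup M] [Module R M]
  (w : ι → Module.End R M) (m₀ : M)

def wordFiltration : ℕ → Submodule R M
  | 0 => ⊥
  | n + 1 => R ∙ m₀ ⊔ ⨆ i, (wordFiltration n).map (w i)

@[simp]
theorem wordFiltration_zero : wordFiltration w m₀ 0 = ⊥ := rfl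

theorem wordFiltration_succ (n : ℕ) :
    wordFiltration w m₀ (n + 1) = R ∙ m₀ ⊔ ⨆ i, (wordFiltration w m₀ n).map (w i) := rfl

@[simp]
theorem wordFiltration_one : wordFiltration w m₀ 1 = R ∙ m₀ := by
  simp [wordFiltration_succ]

theorem wordFiltration_mono : Monotone (wordFiltration w m₀) := by
  refine monotone_nat_of_le_succ fun n => ?_
  induction n with
  | zero => exact bot_le
  | succ n ih => exact sup_le_sup_left (iSup_mono fun i => Submodule.map_mono ih) _

variable {w m₀}

theorem self_mem_wordFiltration_succ (n : ℕ) : m₀ ∈ wordFiltration w m₀ (n + 1) :=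
  Submodule.mem_sup_left (Submodule.mem_span_singleton_self m₀)

theorem apply_mem_wordFiltration_succ (i : ι) {n : ℕ} {m : M} (h : m ∈ wordFiltration w m₀ n) :
    w i m ∈ wordFiltration w m₀ (n + 1) :=
  Submodule.mem_sup_right <| Submodule.mem_iSup_of_mem i (Submodule.mem_map_of_mem h)

end WordFiltration


def KillsGradedTorsion {R M : Type*} [CommRing R] [AddCommGroup M] [Module R M]
    (P : ℕ → Submodule R M) (f : R) : Prop :=
  ∀ n, ∀ m ∈ P (n + 1), ∀ r : R, r ≠ 0 → r • m ∈ P n → f • m ∈ P n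

section TorsionBound

variable {R M ι : Type*} [CommRing R] [AddCommGroup M] [Module R M]
  (w : ι → Module.End R M) (m₀ : M)

abbrev wordSymbol (i : ι) : Module.End R (AssocGr (wordFiltration w m₀)) :=
  AssocGr.symbol (w i) fun _ _ => apply_mem_wordFiltration_succ i

theorem span_mk_wordFiltration_eq_top :
    Submodule.span (Algebra.adjoin R (Set.range (wordSymbol w m₀)))
      {AssocGr.mk (wordFiltration w m₀) 0 ⟨m₀, self_mem_wordFiltration_succ 0⟩} = ⊤ := by
  let P := wordFiltration w m₀
  let A := Algebra.adjoin R (Set.range (wordSymbol w m₀))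
  let V := (Submodule.span A {AssocGr.mk P 0 ⟨m₀, self_mem_wordFiltration_succ 0⟩}).restrictScalars
    R
  suffices h : ∀ n, P (n + 1) ≤ (V.comap (AssocGr.mk P n)).map (P (n + 1)).subtype from
    (Submodule.restrictScalars_eq_top_iff R _ _).mp <| AssocGr.submodule_eq_top fun n x => by
      obtain ⟨y, hy, hyx⟩ := h n x.2
      rwa [← Subtype.ext hyx]
  intro n
  induction n with
  | zero =>
    refine (wordFiltration_one w m₀).le.trans ?_
    rw [Submodule.span_singleton_le_iff_mem]
    exact ⟨_, Submodule.subset_span rfl, rfl⟩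
  | succ n ih =>
    refine sup_le ?_ (iSup_le fun i => Submodule.map_le_iff_le_comap.mpr fun m hm => ?_)
    · rw [Submodule.span_singleton_le_iff_mem]
      refine ⟨⟨m₀, self_mem_wordFiltration_succ _⟩, ?_, rfl⟩
      show AssocGr.mk P (n + 1) _ ∈ V
      rw [(AssocGr.mk_eq_zero_iff _).mpr (self_mem_wordFiltration_succ n)]
      exact V.zero_mem
    · obtain ⟨y, hy, rfl⟩ := ih hm
      refine ⟨⟨w i y, apply_mem_wordFiltration_succ i y.2⟩, ?_, rfl⟩
      show AssocGr.mk P (n + 1) _ ∈ V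
      rw [← AssocGr.symbol_mk]
      exact Submodule.smul_mem (Submodule.span A _) (⟨_, Algebra.subset_adjoin ⟨i, rfl⟩⟩ : A) hy

variable {w m₀}

theorem exists_ne_zero_killsGradedTorsion_wordFiltration [IsDomain R] [IsNoetherianRing R]
    [Finite ι]
    (hcomm : ∀ i j n, ∀ m ∈ wordFiltration w m₀ n,
      w i (w j m) - w j (w i m) ∈ wordFiltration w m₀ (n + 1)) :
    ∃ f : R, f ≠ 0 ∧ KillsGradedTorsion (wordFiltration w m₀) f := by
  let A := Algebra.adjoin R (Set.range (wordSymbol w m₀))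
  have hc : ∀ i j, Commute (wordSymbol w m₀ i) (wordSymbol w m₀ j) := fun i j =>
    AssocGr.commute_symbol _ _ (hcomm i j)
  have : IsNoetherianRing A := isNoetherianRing_adjoin_range_of_commute _ hc
  have : Module.Finite A (AssocGr (wordFiltration w m₀)) :=
    ⟨span_mk_wordFiltration_eq_top w m₀ ▸ Submodule.fg_span_singleton _⟩
  obtain ⟨f, hf, htors⟩ := exists_mem_nonZeroDivisors_smul_eq_zero_of_mem_torsion
    (R := R) (A := A) (G := AssocGr (wordFiltration w m₀))
  refine ⟨f, nonZeroDivisors.ne_zero hf, fun n m hm r hr hrm => ?_⟩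
  have hmr : r • AssocGr.mk _ n ⟨m, hm⟩ = 0 := by
    rw [← map_smul, AssocGr.mk_eq_zero_iff]
    exact hrm
  have := htors _ ((Submodule.mem_torsion_iff _).mpr ⟨⟨r, mem_nonZeroDivisors_of_ne_zero hr⟩, hmr⟩)
  rwa [← map_smul, AssocGr.mk_eq_zero_iff] at this

end TorsionBound

section Descent

variable {R M : Type*} [CommRing R] [AddCommGroup M] [Module R M] {P : ℕ → Submodule R M}
  {f r : R}

theorem exists_pow_smul_mem_one (hP : Monotone P)
    (hf : KillsGradedTorsion P f) (hr : r ≠ 0) :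
    ∀ n, ∀ u ∈ P (n + 1), r • u ∈ P 1 → ∃ e : ℕ, f ^ e • u ∈ P 1
  | 0, u, hu, _ => ⟨0, by rwa [pow_zero, one_smul]⟩
  | n + 1, u, hu, hru => by
    have hfu : f • u ∈ P (n + 1) := hf (n + 1) u hu r hr (hP (by omega) hru)
    have hrfu : r • f • u ∈ P 1 := smul_comm f r u ▸ (P 1).smul_mem f hru
    obtain ⟨e, he⟩ := exists_pow_smul_mem_one hP hf hr n (f • u) hfu hrfu
    exact ⟨e + 1, by rwa [pow_succ, mul_smul]⟩

theorem exists_dvd_pow (hP : Monotone P) {m₀ : M} (hm₀ : m₀ ≠ 0)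
    (hP1 : P 1 = R ∙ m₀) (hexh : ∀ m, ∃ n, m ∈ P n)
    (hbij : ∀ r : R, r ≠ 0 → Function.Bijective fun m : M => r • m)
    (hf : KillsGradedTorsion P f) (hr : r ≠ 0) :
    ∃ e : ℕ, r ∣ f ^ e := by
  obtain ⟨u, hu : r • u = m₀⟩ := (hbij r hr).2 m₀
  obtain ⟨n, hn⟩ := hexh u
  obtain ⟨e, he⟩ := exists_pow_smul_mem_one hP hf hr n u (hP n.le_succ hn) (hu ▸ hP1 ▸
    Submodule.mem_span_singleton_self m₀)
  obtain ⟨c, hc⟩ := Submodule.mem_span_singleton.mp (hP1 ▸ he)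
  refine ⟨e, c, ?_⟩
  by_contra hne
  have : (f ^ e - r * c) • m₀ = 0 := by
    rw [sub_smul, mul_smul, hc, ← hu, smul_comm]
    exact sub_self _
  exact hm₀ ((hbij _ (sub_ne_zero.mpr hne)).1 (this.trans (smul_zero _).symm))

end Descent

theorem exists_ne_zero_forall_dvd_pow {R M ι : Type*} [CommRing R] [IsDomain R]
    [IsNoetherianRing R] [AddCommGroup M] [Module R M] [Finite ι] {w : ι → Module.End R M}
    {m₀ : M} (hm₀ : m₀ ≠ 0)
    (hcomm : ∀ i j n, ∀ m ∈ wordFiltration w m₀ n,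
      w i (w j m) - w j (w i m) ∈ wordFiltration w m₀ (n + 1))
    (hexh : ∀ m, ∃ n, m ∈ wordFiltration w m₀ n)
    (hbij : ∀ r : R, r ≠ 0 → Function.Bijective fun m : M => r • m) :
    ∃ f : R, f ≠ 0 ∧ ∀ r : R, r ≠ 0 → ∃ e : ℕ, r ∣ f ^ e := by
  obtain ⟨f, hf, htors⟩ := exists_ne_zero_killsGradedTorsion_wordFiltration hcomm
  exact ⟨f, hf, fun r hr => exists_dvd_pow (wordFiltration_mono w m₀) hm₀
    (wordFiltration_one w m₀) hexh hbij htors hr⟩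

theorem Polynomial.exists_not_dvd_pow {k : Type*} [Field k] {f : k[X]} (hf : f ≠ 0) :
    ∃ r : k[X], r ≠ 0 ∧ ∀ e : ℕ, ¬ r ∣ f ^ e := by
  have hcop : IsCoprime (f * X + 1) f := ⟨1, -X, by ring⟩
  have hdeg : (f * X + 1).natDegree ≠ 0 := by
    rw [← C_1, natDegree_add_C, natDegree_mul_X hf]
    exact Nat.succ_ne_zero _
  refine ⟨f * X + 1, fun h => hdeg (by rw [h, natDegree_zero]), fun e he => hdeg ?_⟩
  exact natDegree_eq_zero_of_isUnit ((hcop.pow_right (n := e)).isUnit_of_dvd' dvd_rfl he)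

theorem IsSimpleModule.bijective_smul {R S M : Type*} [CommSemiring R] [Ring S] [Algebra R S]
    [AddCommGroup M] [Module S M] [Module R M] [IsScalarTower R S M] [IsSimpleModule S M]
    {r : R} (h : ∃ m : M, r • m ≠ 0) : Function.Bijective fun m : M => r • m :=
  LinearMap.bijective_of_ne_zero (f := DistribSMul.toLinearMap S M r) fun h0 =>
    h.elim fun m hm => hm (LinearMap.congr_fun h0 m)

theorem Algebra.adjoin_eq_top_of_iSup_pow_eq_top {R A : Type*} [CommSemiring R] [Semiring A]
    [Algebra R A] {V : Submodule R A} (h : ⨆ n : ℕ, V ^ n = ⊤) :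
    Algebra.adjoin R (V : Set A) = ⊤ := by
  refine Algebra.toSubmodule_eq_top.mp (top_le_iff.mp (h ▸ iSup_le fun n x hx => ?_))
  induction hx using Submodule.pow_induction_on_left' with
  | algebraMap r => exact Subalgebra.algebraMap_mem _ r
  | add x y i _ _ hx hy => exact add_mem hx hy
  | mem_mul m hm i x _ hx => exact Subalgebra.mul_mem _ (Algebra.subset_adjoin hm) hx

section PolynomialModule

variable {k B M : Type*} [CommRing k] [Ring B] [Algebra k B] [AddCommGroup M] [Module B[X] M]
  [Module k[X] M] [IsScalarTower k[X] B[X] M]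

variable (k M) in
noncomputable def cSmulFamily (s : Set B) (b : s) : Module.End k[X] M :=
  DistribSMul.toLinearMap k[X] M (C (b : B))

@[simp]
theorem cSmulFamily_apply {s : Set B} (b : s) (m : M) : cSmulFamily k M s b m = C (b : B) • m :=
  rfl

def cStabilizer (U : Submodule k[X] M) : Subalgebra k B where
  carrier := {b | ∀ m ∈ U, C b • m ∈ U}
  mul_mem' ha hb m hm := by
    rw [C_mul, mul_smul]
    exact ha _ (hb m hm)
  add_mem' ha hb m hm := by
    rw [C_add, add_smul]
    exact U.add_mem (ha m hm) (hb m hm)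
  algebraMap_mem' c m hm := by
    have hc : C (algebraMap k B c) = algebraMap k[X] B[X] (C c) := by simp
    rw [hc, algebraMap_smul]
    exact U.smul_mem _ hm

theorem Submodule.eq_top_of_C_smul_mem [IsSimpleModule B[X] M] {U : Submodule k[X] M}
    (hU : U ≠ ⊥) (h : ∀ b : B, ∀ m ∈ U, C b • m ∈ U) : U = ⊤ := by
  let N : Submodule B[X] M :=
    { U.toAddSubmonoid with
      smul_mem' := fun a m hm => by
        induction a using Polynomial.induction_on' with
        | add p q hp hq => rw [add_smul]; exact U.add_mem hp hq
        | monomial j b =>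
          have hX : (X ^ j : B[X]) = algebraMap k[X] B[X] (X ^ j) := by simp
          rw [← C_mul_X_pow_eq_monomial, mul_smul, hX, algebraMap_smul]
          exact h b _ (U.smul_mem _ hm) }
  rcases IsSimpleOrder.eq_bot_or_eq_top N with hN | hN
  · exact absurd ((Submodule.eq_bot_iff U).mpr fun m hm => (Submodule.eq_bot_iff N).mp hN m hm) hU
  · exact eq_top_iff.mpr fun m _ => (hN ▸ Submodule.mem_top : m ∈ N)

theorem exists_mem_wordFiltration [IsSimpleModule B[X] M] {s : Set B}
    (hs : Algebra.adjoin k s = ⊤) {m₀ : M} (hm₀ : m₀ ≠ 0) (m : M) :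
    ∃ n, m ∈ wordFiltration (cSmulFamily k M s) m₀ n := by
  set P := wordFiltration (cSmulFamily k M s) m₀
  have hmem : ∀ {m}, m ∈ ⨆ n, P n ↔ ∃ n, m ∈ P n :=
    Submodule.mem_iSup_of_directed _ (wordFiltration_mono _ m₀).directed_le
  have hne : ⨆ n, P n ≠ ⊥ := fun h =>
    hm₀ ((Submodule.eq_bot_iff _).mp h m₀ (hmem.mpr ⟨1, self_mem_wordFiltration_succ 0⟩))
  have hstab : Algebra.adjoin k s ≤ cStabilizer (⨆ n, P n) :=
    Algebra.adjoin_le fun b hb m hm => by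
      obtain ⟨n, hn⟩ := hmem.mp hm
      exact hmem.mpr ⟨n + 1, apply_mem_wordFiltration_succ (⟨b, hb⟩ : s) hn⟩
  have htop := Submodule.eq_top_of_C_smul_mem (B := B) hne fun b => hstab (hs ▸ Algebra.mem_top)
  exact hmem.mp (htop ▸ Submodule.mem_top)

theorem C_smul_mem_wordFiltration_succ {s : Set B} {m₀ : M} {x : B}
    (hx : x ∈ Submodule.span k s) {n : ℕ} {m : M}
    (hm : m ∈ wordFiltration (cSmulFamily k M s) m₀ n) :
    C x • m ∈ wordFiltration (cSmulFamily k M s) m₀ (n + 1) := by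
  induction hx using Submodule.span_induction with
  | mem b hb => exact apply_mem_wordFiltration_succ ⟨b, hb⟩ hm
  | zero => rw [map_zero, zero_smul]; exact Submodule.zero_mem _
  | add x y _ _ hx hy => rw [map_add, add_smul]; exact Submodule.add_mem _ hx hy
  | smul c x _ hx =>
    rw [← smul_C, ← algebraMap_smul k[X] c (C x), smul_assoc]
    exact Submodule.smul_mem _ _ hx

theorem cSmulFamily_commutator_mem_wordFiltration_succ {s : Set B}
    (hs : ∀ x ∈ s, ∀ y ∈ s, x * y - y * x ∈ Submodule.span k s) {m₀ : M} (i j : s) {n : ℕ}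
    {m : M} (hm : m ∈ wordFiltration (cSmulFamily k M s) m₀ n) :
    cSmulFamily k M s i (cSmulFamily k M s j m) - cSmulFamily k M s j (cSmulFamily k M s i m) ∈
      wordFiltration (cSmulFamily k M s) m₀ (n + 1) := by
  rw [cSmulFamily_apply, cSmulFamily_apply, cSmulFamily_apply, cSmulFamily_apply, ← mul_smul,
    ← mul_smul, ← sub_smul, ← C_mul, ← C_mul, ← C_sub]
  exact C_smul_mem_wordFiltration_succ (hs _ i.2 _ j.2) hm

end PolynomialModule

/-- Let `k` be a field and `(B, 𝔤)` a finitely generated almost commutative `k`-algebra: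
`𝔤 ⊆ B` is a finite-dimensional `k`-subspace, closed under commutators, with
`B = Σ_{n ≥ 0} 𝔤ⁿ`.  Then `B` satisfies condition (D): for every simple left
`B[X]`-module `M` there is a nonzero polynomial `g ∈ k[X]` with `g • M = 0`
(equivalently, the endomorphism `φ(m) = X • m` is algebraic over `k`). -/
theorem almost_commutative_condition_D (k B : Type) [Field k] [Ring B] [Algebra k B]
    (𝔤 : Submodule k B) (hfg : 𝔤.FG)
    (hlie : ∀ x ∈ 𝔤, ∀ y ∈ 𝔤, x * y - y * x ∈ 𝔤)
    (hgen : (⨆ n : ℕ, 𝔤 ^ n) = ⊤) :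
    ∀ (M : Type) [AddCommGroup M] [Module (Polynomial B) M],
      IsSimpleModule (Polynomial B) M →
      ∃ g : Polynomial k, g ≠ 0 ∧ ∀ m : M, (g.map (algebraMap k B)) • m = 0 := by
  intro M _ _ _
  let _ : Module k[X] M := Module.compHom M (algebraMap k[X] B[X])
  have : IsScalarTower k[X] B[X] M := .of_algebraMap_smul fun _ _ => rfl
  by_contra! hM
  obtain ⟨s, rfl⟩ := hfg
  have := IsSimpleModule.nontrivial B[X] M
  obtain ⟨m₀, hm₀⟩ := exists_ne (0 : M)
  have hs : Algebra.adjoin k (s : Set B) = ⊤ := by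
    rw [← Algebra.adjoin_span]
    exact Algebra.adjoin_eq_top_of_iSup_pow_eq_top hgen
  have hcomm := cSmulFamily_commutator_mem_wordFiltration_succ (M := M) (m₀ := m₀)
    fun x hx y hy => hlie x (Submodule.subset_span hx) y (Submodule.subset_span hy)
  obtain ⟨f, hf, hdvd⟩ := exists_ne_zero_forall_dvd_pow hm₀ (fun i j _ _ => hcomm i j)
    (exists_mem_wordFiltration hs hm₀) fun r hr =>
      IsSimpleModule.bijective_smul (S := B[X]) (hM r hr)
  obtain ⟨r, hr, hndvd⟩ := Polynomial.exists_not_dvd_pow hf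
  exact (hdvd r hr).elim hndvd
end

section
/- Let B be a unital ring, Λ ⊆ B a p-closed subset (for every a ∈ Λ there exists x ∈ B with axa ∈ Λ), and x ∈ Λ. Then there exists a countable subset Λ₀ of B with Λ₀ ⊆ Λ, x ∈ Λ₀, and Λ₀ m-closed (for any a, b ∈ Λ₀ there exists y ∈ B with ayb ∈ Λ₀). -/
/-!
Starting from `x`, iterate `a ↦ a w a` (with `w` supplied by p-closedness) to get a sequence
`x = a₀, a₁, …` in `Λ`. Each term is a left and a right multiple of every earlier one, so for
`i ≤ j` the next term `a_{j+1} = a_j w a_j` factors as `a_i y a_j`, and symmetrically for `j ≤ i`.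
The range of the sequence is therefore m-closed.
-/

namespace SandwichSequence

variable {M : Type*} [Monoid M] {s : ℕ → M}

theorem dvd_of_le (hs : ∀ n, ∃ w, s (n + 1) = s n * w * s n) {m n : ℕ} (hmn : m ≤ n) :
    s m ∣ s n :=
  Nat.rel_of_forall_rel_succ_of_le (· ∣ ·) (f := s)
    (fun n ↦ let ⟨w, hw⟩ := hs n; Dvd.intro (w * s n) (by rw [hw, mul_assoc])) hmn

theorem exists_mul_eq_of_le (hs : ∀ n, ∃ w, s (n + 1) = s n * w * s n) {m n : ℕ}
    (hmn : m ≤ n) : ∃ v, s n = v * s m := by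
  have hs_op : ∀ n, ∃ w, MulOpposite.op (s (n + 1)) =
      MulOpposite.op (s n) * w * MulOpposite.op (s n) := fun n ↦
    let ⟨w, hw⟩ := hs n; ⟨MulOpposite.op w, by simp only [hw, ← MulOpposite.op_mul, mul_assoc]⟩
  obtain ⟨c, hc⟩ := dvd_of_le (s := fun n ↦ MulOpposite.op (s n)) hs_op hmn
  exact ⟨c.unop, by simpa using congrArg MulOpposite.unop hc⟩

theorem exists_mul_mul_mem_range (hs : ∀ n, ∃ w, s (n + 1) = s n * w * s n) (i j : ℕ) :
    ∃ y, s i * y * s j ∈ Set.range s := by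
  rcases le_total i j with hij | hji
  · obtain ⟨u, hu⟩ := dvd_of_le hs hij
    obtain ⟨w, hw⟩ := hs j
    exact ⟨u * w, j + 1, by rw [hw]; nth_rewrite 1 [hu]; simp only [mul_assoc]⟩
  · obtain ⟨v, hv⟩ := exists_mul_eq_of_le hs hji
    obtain ⟨w, hw⟩ := hs i
    exact ⟨w * v, i + 1, by rw [hw]; nth_rewrite 2 [hv]; simp only [mul_assoc]⟩

end SandwichSequence

theorem exists_sandwich_sequence {M : Type*} [Mul M] {Λ : Set M}
    (hp : ∀ a ∈ Λ, ∃ x : M, a * x * a ∈ Λ) {x : M} (hx : x ∈ Λ) :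
    ∃ s : ℕ → M, s 0 = x ∧ (∀ n, s n ∈ Λ) ∧ ∀ n, ∃ w, s (n + 1) = s n * w * s n := by
  choose w hw using hp
  let step : Λ → Λ := fun a ↦ ⟨a * w a a.2 * a, hw a a.2⟩
  refine ⟨fun n ↦ step^[n] ⟨x, hx⟩, rfl, fun n ↦ (step^[n] ⟨x, hx⟩).2, fun n ↦ ?_⟩
  exact ⟨_, congrArg Subtype.val (Function.iterate_succ_apply' step n ⟨x, hx⟩)⟩

/-- Let `B` be a unital ring, `Λ ⊆ B` a p-closed subset (for every `a ∈ Λ` there is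
`x ∈ B` with `a x a ∈ Λ`), and `x ∈ Λ`.  Then there is a countable subset `Λ₀ ⊆ Λ`
with `x ∈ Λ₀` which is m-closed (for all `a, b ∈ Λ₀` there is `y ∈ B` with
`a y b ∈ Λ₀`). -/
theorem pclosed_contains_countable_mclosed (B : Type) [Ring B] (Λ : Set B)
    (hp : ∀ a ∈ Λ, ∃ x : B, a * x * a ∈ Λ) (x : B) (hx : x ∈ Λ) :
    ∃ Λ₀ : Set B, Λ₀.Countable ∧ Λ₀ ⊆ Λ ∧ x ∈ Λ₀ ∧
      ∀ a ∈ Λ₀, ∀ b ∈ Λ₀, ∃ y : B, a * y * b ∈ Λ₀ := by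
  obtain ⟨s, hs0, hsΛ, hs⟩ := exists_sandwich_sequence hp hx
  refine ⟨Set.range s, Set.countable_range s, Set.range_subset_iff.mpr hsΛ, ⟨0, hs0⟩, ?_⟩
  rintro _ ⟨i, rfl⟩ _ ⟨j, rfl⟩
  exact SandwichSequence.exists_mul_mul_mem_range hs i j
end
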